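/- Averaged increment bound: Let X be a k-homogeneous point process on {1,…,m} that is ℓ∞-independent with parameter d_inf, with intensity ρ_X and density ν_X = ρ_X/k. Then for all e and i in the support of ρ_X, E_{e∼ν_X}[|δ_{X,e}(i)|] ≤ d_inf·ν_X(i). Furthermore, if X is a DPP whose correlation kernel K is an orthogonal projection (K² = K = K*), then E_{e∼ν_X}[δ_{X,e}(i)] = 0 and E_{e∼ν_X}[|δ_{X,e}(i)|] = (2 − 2K_{ii})·ν_X(i) for all i in the support of ρ_X. -/
import Mathlib


open Matrix Finset
open scoped Classical ComplexOrder

/-- Principal submatrix of `A` indexed by the finite set `S`. -/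
noncomputable def principalSub {α : Type*} [Fintype α] [DecidableEq α]
    (A : Matrix α α ℂ) (S : Finset α) : Matrix S S ℂ :=
  A.submatrix (fun i => (i : α)) (fun i => (i : α))

/-- `μ` is the law of a determinantal point process with correlation kernel `K`. -/
def IsDPP {α : Type*} [Fintype α] [DecidableEq α]
    (μ : Finset α → ℝ) (K : Matrix α α ℂ) : Prop :=
  ∀ A : Finset α,
    ((∑ F ∈ Finset.univ.filter (fun F => A ⊆ F), μ F : ℝ) : ℂ) = (principalSub K A).det

/-- Intensity of a point process: `ρ_X(i) = Pr(i ∈ X)`. -/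
noncomputable def intensity {α : Type*} [Fintype α] [DecidableEq α]
    (μ : Finset α → ℝ) (i : α) : ℝ :=
  ∑ F ∈ Finset.univ.filter (fun F => i ∈ F), μ F

/-- Normalizing constant of the reduced process `X_{A1}^{A0}`. -/
noncomputable def redNorm {α : Type*} [Fintype α] [DecidableEq α]
    (μ : Finset α → ℝ) (A0 A1 : Finset α) : ℝ :=
  ∑ B ∈ Finset.univ.filter (fun B => Disjoint B (A0 ∪ A1)), μ (A1 ∪ B)

/-- The reduced process `X_{A1}^{A0}` obtained from `μ` by excluding `A0` and
including `A1`: its law on subsets `B` of the complement of `A0 ∪ A1` is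
proportional to `μ (A1 ∪ B)`. -/
noncomputable def reduced {α : Type*} [Fintype α] [DecidableEq α]
    (μ : Finset α → ℝ) (A0 A1 : Finset α) : Finset α → ℝ :=
  fun B => if Disjoint B (A0 ∪ A1) then μ (A1 ∪ B) / redNorm μ A0 A1 else 0

/-- `δ_{X,e}(i) = 1 - ρ_X(e)` if `i = e`, and `ρ_{X_e}(i) - ρ_X(i)` otherwise. -/
noncomputable def deltaPP {α : Type*} [Fintype α] [DecidableEq α]
    (μ : Finset α → ℝ) (e i : α) : ℝ :=
  if i = e then 1 - intensity μ e else intensity (reduced μ ∅ {e}) i - intensity μ i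

/-- A point process is `k`-homogeneous if all its samples have cardinality `k`. -/
def IsHomogeneous {α : Type*} (μ : Finset α → ℝ) (k : ℕ) : Prop :=
  ∀ F, μ F ≠ 0 → F.card = k

/-- `ℓ∞`-independence with parameter `dinf`: for all disjoint `A0, A1` such that the
reduced process `Y = X_{A1}^{A0}` exists, and all `e` in the support of the intensity
of `Y`, the total variation `∑_{i ∈ supp ρ_Y} |δ_{Y,e}(i)|` is at most `dinf`. -/
def LinftyIndep {α : Type*} [Fintype α] [DecidableEq α]
    (μ : Finset α → ℝ) (dinf : ℝ) : Prop :=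
  ∀ A0 A1 : Finset α, Disjoint A0 A1 → redNorm μ A0 A1 ≠ 0 →
    ∀ e : α, intensity (reduced μ A0 A1) e ≠ 0 →
      ∑ i ∈ Finset.univ.filter (fun i => intensity (reduced μ A0 A1) i ≠ 0),
        |deltaPP (reduced μ A0 A1) e i| ≤ dinf

section AuxAIB
variable {α : Type*} [Fintype α] [DecidableEq α] (μ : Finset α → ℝ)

noncomputable def Jpp (e i : α) : ℝ :=
  ∑ F ∈ Finset.univ.filter (fun F => e ∈ F ∧ i ∈ F), μ F

lemma Jpp_symm (e i : α) : Jpp μ e i = Jpp μ i e := by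
  unfold Jpp; congr 1; ext F; simp [and_comm]

lemma intensity_nonneg (hμ0 : ∀ F, 0 ≤ μ F) (i : α) : 0 ≤ intensity μ i :=
  Finset.sum_nonneg fun F _ => hμ0 F

lemma intensity_le_one (hμ0 : ∀ F, 0 ≤ μ F) (hμ1 : ∑ F, μ F = 1) (i : α) :
    intensity μ i ≤ 1 := by
  rw [← hμ1]
  exact Finset.sum_le_sum_of_subset_of_nonneg (Finset.filter_subset _ _)
    (fun F _ _ => hμ0 F)

lemma Jpp_le (hμ0 : ∀ F, 0 ≤ μ F) (e i : α) : Jpp μ e i ≤ intensity μ e := by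
  apply Finset.sum_le_sum_of_subset_of_nonneg
  · intro F hF; simp only [mem_filter] at *; tauto
  · exact fun F _ _ => hμ0 F

lemma Jpp_nonneg (hμ0 : ∀ F, 0 ≤ μ F) (e i : α) : 0 ≤ Jpp μ e i :=
  Finset.sum_nonneg fun F _ => hμ0 F

lemma redNorm_singleton (e : α) : redNorm μ ∅ {e} = intensity μ e := by
  unfold redNorm intensity
  refine Finset.sum_nbij' (fun B => insert e B) (fun F => F.erase e) ?_ ?_ ?_ ?_ ?_
  · intro B hB; simp
  · intro F hF
    simp only [mem_filter, mem_univ, true_and, empty_union,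
      Finset.disjoint_singleton_right] at *
    exact Finset.notMem_erase e F
  · intro B hB
    simp only [mem_filter, mem_univ, true_and, empty_union,
      Finset.disjoint_singleton_right] at hB
    exact Finset.erase_insert hB
  · intro F hF
    simp only [mem_filter, mem_univ, true_and] at hF
    exact Finset.insert_erase hF
  · intro B hB; rfl

lemma intensity_reduced_mul (hμ0 : ∀ F, 0 ≤ μ F) {e i : α} (hne : i ≠ e) :
    intensity μ e * intensity (reduced μ ∅ {e}) i = Jpp μ e i := by
  by_cases h : intensity μ e = 0
  · rw [h, zero_mul]
    have hle := Jpp_le μ hμ0 e i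
    have hge := Jpp_nonneg μ hμ0 e i
    linarith
  · have hred : redNorm μ ∅ {e} = intensity μ e := redNorm_singleton μ e
    unfold intensity reduced
    rw [Finset.mul_sum]
    have hterm : ∀ B : Finset α,
        (∑ F ∈ filter (fun F => e ∈ F) univ, μ F) *
          (if Disjoint B (∅ ∪ {e}) then μ ({e} ∪ B) / redNorm μ ∅ {e} else 0)
        = if e ∉ B then μ (insert e B) else 0 := by
      intro B
      rw [hred]
      unfold intensity
      simp only [empty_union, Finset.disjoint_singleton_right, mul_ite, mul_zero]
      split
      · rw [show ({e} ∪ B : Finset α) = insert e B from rfl, mul_comm]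
        exact div_mul_cancel₀ _ h
      · rfl
    rw [Finset.sum_congr rfl (fun B _ => hterm B)]
    rw [← Finset.sum_filter, Finset.filter_filter]
    unfold Jpp
    refine Finset.sum_nbij' (fun B => insert e B) (fun F => F.erase e) ?_ ?_ ?_ ?_ ?_
    · intro B hB
      simp only [mem_filter, mem_univ, true_and] at *
      exact ⟨Finset.mem_insert_self e B, Finset.mem_insert_of_mem hB.1⟩
    · intro F hF
      simp only [mem_filter, mem_univ, true_and] at *
      exact ⟨Finset.mem_erase.2 ⟨hne, hF.2⟩, Finset.notMem_erase e F⟩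
    · intro B hB
      simp only [mem_filter, mem_univ, true_and] at hB
      exact Finset.erase_insert hB.2
    · intro F hF
      simp only [mem_filter, mem_univ, true_and] at hF
      exact Finset.insert_erase hF.1
    · intro B hB; rfl

lemma Jpp_self (e : α) : Jpp μ e e = intensity μ e := by
  unfold Jpp intensity; congr 1; ext F; simp

lemma key_identity (hμ0 : ∀ F, 0 ≤ μ F) (e i : α) :
    intensity μ e * deltaPP μ e i = Jpp μ e i - intensity μ e * intensity μ i := by
  unfold deltaPP
  by_cases hie : i = e
  · subst hie
    simp only [eq_self_iff_true, if_true, Jpp_self]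
    ring
  · rw [if_neg hie, mul_sub, intensity_reduced_mul μ hμ0 hie]

lemma key_symm (hμ0 : ∀ F, 0 ≤ μ F) (e i : α) :
    intensity μ e * deltaPP μ e i = intensity μ i * deltaPP μ i e := by
  rw [key_identity μ hμ0, key_identity μ hμ0, Jpp_symm]; ring

lemma delta_zero (hμ0 : ∀ F, 0 ≤ μ F) {e i : α} (hi : intensity μ i ≠ 0)
    (he : intensity μ e = 0) : deltaPP μ i e = 0 := by
  have h := key_symm μ hμ0 e i
  rw [he, zero_mul] at h
  exact (mul_eq_zero.1 h.symm).resolve_left hi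

lemma redNorm_empty_empty (hμ1 : ∑ F, μ F = 1) : redNorm μ ∅ ∅ = 1 := by
  unfold redNorm
  rw [← hμ1]
  apply Finset.sum_congr
  · ext B; simp
  · intros; rw [Finset.empty_union]

lemma reduced_empty_empty (hμ1 : ∑ F, μ F = 1) : reduced μ ∅ ∅ = μ := by
  funext B
  unfold reduced
  rw [redNorm_empty_empty μ hμ1]
  simp

lemma sum_intensity (ν : Finset α → ℝ) (c : ℝ) (hc : ∀ F, ν F ≠ 0 → (F.card : ℝ) = c) :
    ∑ j, intensity ν j = c * ∑ F, ν F := by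
  unfold intensity
  simp only [Finset.sum_filter]
  rw [Finset.sum_comm]
  rw [Finset.mul_sum]
  apply Finset.sum_congr rfl
  intro F _
  rw [Finset.sum_ite_mem, Finset.univ_inter, Finset.sum_const, nsmul_eq_mul]
  by_cases h : ν F = 0
  · rw [h]; ring
  · rw [hc F h]

lemma sum_reduced_singleton (hi : intensity μ i ≠ 0) :
    ∑ B, reduced μ ∅ {i} B = 1 := by
  unfold reduced
  rw [← Finset.sum_filter, ← Finset.sum_div]
  rw [show (∑ B ∈ filter (fun B => Disjoint B (∅ ∪ {i})) univ, μ ({i} ∪ B)) = redNorm μ ∅ {i} from rfl]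
  rw [div_self]
  rw [redNorm_singleton]
  exact hi

lemma reduced_card (hhomk : ∀ F, μ F ≠ 0 → F.card = k) {i : α} (B : Finset α)
    (hB : reduced μ ∅ {i} B ≠ 0) : B.card + 1 = k := by
  unfold reduced at hB
  by_cases hd : Disjoint B (∅ ∪ {i})
  · rw [if_pos hd] at hB
    have hμB : μ ({i} ∪ B) ≠ 0 := by
      intro h0; rw [h0] at hB; simp at hB
    have := hhomk _ hμB
    rw [show ({i} ∪ B : Finset α) = insert i B from rfl] at this
    rw [Finset.card_insert_of_notMem] at this
    · exact this
    · simp only [empty_union, Finset.disjoint_singleton_right] at hd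
      exact hd
  · rw [if_neg hd] at hB; exact absurd rfl hB

lemma intensity_reduced_self (i : α) : intensity (reduced μ ∅ {i}) i = 0 := by
  unfold intensity
  apply Finset.sum_eq_zero
  intro B hB
  simp only [mem_filter, mem_univ, true_and] at hB
  unfold reduced
  rw [if_neg]
  simp only [empty_union, Finset.disjoint_singleton_right]
  exact fun h => h hB

lemma dpp_diag {K : Matrix α α ℂ} (hK : IsDPP μ K) (j : α) :
    (intensity μ j : ℂ) = K j j := by
  have h := hK {j}
  have hfil : filter (fun F => ({j} : Finset α) ⊆ F) univ = filter (fun F => j ∈ F) univ := by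
    ext F; simp [Finset.singleton_subset_iff]
  rw [hfil] at h
  rw [show intensity μ j = ∑ F ∈ filter (fun F => j ∈ F) univ, μ F from rfl, h]
  let σ : Fin 1 ≃ ({j} : Finset α) :=
    { toFun := fun _ => ⟨j, Finset.mem_singleton_self j⟩
      invFun := fun _ => 0
      left_inv := fun x => Subsingleton.elim _ _
      right_inv := fun x => by
        ext
        exact (Finset.mem_singleton.mp x.2).symm }
  rw [← Matrix.det_submatrix_equiv_self σ (principalSub K {j})]
  rw [Matrix.det_fin_one]
  rfl

lemma dpp_pair {K : Matrix α α ℂ} (hK : IsDPP μ K) {i e : α} (hne : i ≠ e) :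
    (Jpp μ i e : ℂ) = K i i * K e e - K i e * K e i := by
  have h := hK {i, e}
  have hfil : filter (fun F => ({i, e} : Finset α) ⊆ F) univ
      = filter (fun F => i ∈ F ∧ e ∈ F) univ := by
    ext F; simp [Finset.insert_subset_iff, Finset.singleton_subset_iff]
  rw [hfil] at h
  rw [show Jpp μ i e = ∑ F ∈ filter (fun F => i ∈ F ∧ e ∈ F) univ, μ F from rfl, h]
  have hi : i ∈ ({i, e} : Finset α) := by simp
  have he : e ∈ ({i, e} : Finset α) := by simp
  let σ : Fin 2 ≃ ({i, e} : Finset α) :=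
    { toFun := fun x => if x = 0 then ⟨i, hi⟩ else ⟨e, he⟩
      invFun := fun y => if (y : α) = i then 0 else 1
      left_inv := fun x => by
        fin_cases x
        · simp
        · simp [hne.symm]
      right_inv := fun y => by
        rcases Finset.mem_insert.mp y.2 with h' | h'
        · simp only [h', if_pos rfl]
          exact Subtype.ext h'.symm
        · have h'' := Finset.mem_singleton.mp h'
          simp only [h'', if_neg (Ne.symm hne), if_neg one_ne_zero]
          exact Subtype.ext h''.symm }
  rw [← Matrix.det_submatrix_equiv_self σ (principalSub K {i, e})]
  rw [Matrix.det_fin_two]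
  have h0 : σ 0 = ⟨i, hi⟩ := rfl
  have h1 : σ 1 = ⟨e, he⟩ := by simp [σ, Equiv.coe_fn_mk]
  simp only [Matrix.submatrix_apply, h0, h1]
  rfl

lemma avg_lin (c : ℝ) (hμ0 : ∀ F, 0 ≤ μ F) (i : α) :
    ∑ e, (intensity μ e / c) * deltaPP μ e i
      = (intensity μ i / c) * ∑ e, deltaPP μ i e := by
  rw [Finset.mul_sum]
  apply Finset.sum_congr rfl
  intro e _
  rw [div_mul_eq_mul_div, div_mul_eq_mul_div, key_symm μ hμ0]

lemma avg_abs (c : ℝ) (_hc : 0 ≤ c) (hμ0 : ∀ F, 0 ≤ μ F) (i : α) :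
    ∑ e, (intensity μ e / c) * |deltaPP μ e i|
      = (intensity μ i / c) * ∑ e, |deltaPP μ i e| := by
  rw [Finset.mul_sum]
  apply Finset.sum_congr rfl
  intro e _
  rw [div_mul_eq_mul_div, div_mul_eq_mul_div,
    ← abs_of_nonneg (intensity_nonneg μ hμ0 e), ← abs_mul, key_symm μ hμ0,
    abs_mul, abs_of_nonneg (intensity_nonneg μ hμ0 i)]

lemma part1 {m : ℕ} (μ : Finset (Fin m) → ℝ) (hμ0 : ∀ F, 0 ≤ μ F) (hμ1 : ∑ F, μ F = 1)
    (k : ℕ) (dinf : ℝ)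
    (hind : ∀ A0 A1 : Finset (Fin m), Disjoint A0 A1 → redNorm μ A0 A1 ≠ 0 →
      ∀ e : Fin m, intensity (reduced μ A0 A1) e ≠ 0 →
        ∑ i ∈ Finset.univ.filter (fun i => intensity (reduced μ A0 A1) i ≠ 0),
          |deltaPP (reduced μ A0 A1) e i| ≤ dinf)
    (i : Fin m) (hi : intensity μ i ≠ 0) :
    ∑ e : Fin m, (intensity μ e / k) * |deltaPP μ e i| ≤ dinf * (intensity μ i / k) := by
  rw [avg_abs μ (k : ℝ) (Nat.cast_nonneg k) hμ0 i, mul_comm dinf]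
  apply mul_le_mul_of_nonneg_left _ (div_nonneg (intensity_nonneg μ hμ0 i) (Nat.cast_nonneg k))
  have hred := reduced_empty_empty μ hμ1
  have hS : ∑ e ∈ Finset.univ.filter (fun e => intensity μ e ≠ 0), |deltaPP μ i e|
      = ∑ e, |deltaPP μ i e| := by
    apply Finset.sum_filter_of_ne
    intro e _ h0
    intro he
    exact h0 (by rw [delta_zero μ hμ0 hi he, abs_zero])
  rw [← hS]
  have := hind ∅ ∅ (Finset.disjoint_empty_left ∅)
    (by rw [redNorm_empty_empty μ hμ1]; exact one_ne_zero) i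
  rw [hred] at this
  exact this hi

lemma k_pos {k : ℕ} (hhom : ∀ F, μ F ≠ 0 → F.card = k) {i : α}
    (hi : intensity μ i ≠ 0) : 1 ≤ k := by
  obtain ⟨F, hF, hF0⟩ := Finset.exists_ne_zero_of_sum_ne_zero hi
  simp only [mem_filter, mem_univ, true_and] at hF
  rw [← hhom F hF0]
  exact Finset.card_pos.2 ⟨i, hF⟩

lemma delta_sum_zero (hμ0 : ∀ F, 0 ≤ μ F) (hμ1 : ∑ F, μ F = 1) {k : ℕ}
    (hhom : ∀ F, μ F ≠ 0 → F.card = k) {i : α} (hi : intensity μ i ≠ 0) :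
    ∑ e, deltaPP μ i e = 0 := by
  rw [← Finset.add_sum_erase _ _ (Finset.mem_univ i)]
  have hdi : deltaPP μ i i = 1 - intensity μ i := by unfold deltaPP; rw [if_pos rfl]
  have hsum : ∑ e ∈ Finset.univ.erase i, deltaPP μ i e
      = ∑ e ∈ Finset.univ.erase i,
          (intensity (reduced μ ∅ {i}) e - intensity μ e) := by
    apply Finset.sum_congr rfl
    intro e he
    unfold deltaPP
    rw [if_neg (Finset.ne_of_mem_erase he)]
  rw [hdi, hsum, Finset.sum_sub_distrib,
    Finset.sum_erase_eq_sub (Finset.mem_univ i),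
    Finset.sum_erase_eq_sub (Finset.mem_univ i)]
  have h1 : ∑ e, intensity (reduced μ ∅ {i}) e
      = ((k : ℝ) - 1) * ∑ B, reduced μ ∅ {i} B := by
    apply sum_intensity
    intro B hB
    have h' := reduced_card μ (k := k) hhom B hB
    have h'' : ((B.card : ℝ) + 1 = (k : ℝ)) := by exact_mod_cast h'
    linarith
  rw [sum_reduced_singleton μ hi] at h1
  have h2 : ∑ e, intensity μ e = (k : ℝ) * ∑ F, μ F := by
    apply sum_intensity
    intro F hF
    exact_mod_cast hhom F hF
  rw [hμ1] at h2
  rw [h1, h2, intensity_reduced_self]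
  ring

lemma normSq_row_sum {K : Matrix α α ℂ} (hH : K.IsHermitian) (hP : K * K = K) (i : α) :
    ∑ e, Complex.normSq (K i e) = (K i i).re := by
  have h : (K * K) i i = K i i := by rw [hP]
  rw [Matrix.mul_apply] at h
  have h2 : ∑ e, K i e * K e i = ∑ e, (Complex.normSq (K i e) : ℂ) := by
    apply Finset.sum_congr rfl
    intro e _
    rw [← hH.apply e i]
    exact Complex.mul_conj _
  rw [h2] at h
  have h3 : ((∑ e, Complex.normSq (K i e) : ℝ) : ℂ) = K i i := by push_cast; exact h
  rw [← h3]
  rfl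

lemma dpp_abs_sum (hμ0 : ∀ F, 0 ≤ μ F) (hμ1 : ∑ F, μ F = 1)
    {K : Matrix α α ℂ} (hH : K.IsHermitian) (hP : K * K = K) (hK : IsDPP μ K)
    {i : α} (hi : intensity μ i ≠ 0) :
    ∑ e, |deltaPP μ i e| = 2 - 2 * (K i i).re := by
  set ρ := intensity μ i with hρdef
  have hρC : (ρ : ℂ) = K i i := dpp_diag μ hK i
  have hre : (K i i).re = ρ := by rw [← hρC]; rfl
  have hρ0 : 0 ≤ ρ := intensity_nonneg μ hμ0 i
  have hρ1 : ρ ≤ 1 := intensity_le_one μ hμ0 hμ1 i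
  apply mul_left_cancel₀ hi
  rw [Finset.mul_sum]
  have hterm : ∀ e, ρ * |deltaPP μ i e| = |ρ * deltaPP μ i e| := by
    intro e
    rw [abs_mul, abs_of_nonneg hρ0]
  rw [Finset.sum_congr rfl (fun e _ => hterm e)]
  rw [← Finset.add_sum_erase _ _ (Finset.mem_univ i)]
  have hii : ρ * deltaPP μ i i = ρ * (1 - ρ) := by
    unfold deltaPP
    rw [if_pos rfl]
  have habs_ii : |ρ * deltaPP μ i i| = ρ * (1 - ρ) := by
    rw [hii, abs_of_nonneg (by nlinarith)]
  have hoff : ∀ e ∈ Finset.univ.erase i,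
      |ρ * deltaPP μ i e| = Complex.normSq (K i e) := by
    intro e he
    have hne : e ≠ i := Finset.ne_of_mem_erase he
    have hkey := key_identity μ hμ0 i e
    have hpair := dpp_pair μ hK (Ne.symm hne)
    have heC : (intensity μ e : ℂ) = K e e := dpp_diag μ hK e
    rw [← hρdef] at hkey
    have hC : ((ρ * deltaPP μ i e : ℝ) : ℂ) = -(Complex.normSq (K i e) : ℂ) := by
      rw [hkey]
      push_cast
      rw [hpair, hρC, heC]
      have hm : K i e * K e i = (Complex.normSq (K i e) : ℂ) := by
        rw [← hH.apply e i]
        exact Complex.mul_conj _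
      rw [hm]
      ring
    have hR : ρ * deltaPP μ i e = -Complex.normSq (K i e) := by
      exact_mod_cast hC
    rw [hR, abs_neg, abs_of_nonneg (Complex.normSq_nonneg _)]
  rw [Finset.sum_congr rfl hoff, habs_ii,
    Finset.sum_erase_eq_sub (Finset.mem_univ i), normSq_row_sum hH hP i, hre]
  have : Complex.normSq (K i i) = ρ * ρ := by
    rw [← hρC, Complex.normSq_ofReal]
  rw [this]
  ring

end AuxAIB

/-- **Averaged increment bound.** -/
theorem averaged_increment_bound
    {m : ℕ} (μ : Finset (Fin m) → ℝ) (hμ0 : ∀ F, 0 ≤ μ F) (hμ1 : ∑ F, μ F = 1)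
    (k : ℕ) (hhom : IsHomogeneous μ k)
    (dinf : ℝ) (hind : LinftyIndep μ dinf) :
    (∀ i : Fin m, intensity μ i ≠ 0 →
        ∑ e : Fin m, (intensity μ e / k) * |deltaPP μ e i| ≤ dinf * (intensity μ i / k)) ∧
    (∀ K : Matrix (Fin m) (Fin m) ℂ, K.IsHermitian → K * K = K → IsDPP μ K →
      ∀ i : Fin m, intensity μ i ≠ 0 →
        (∑ e : Fin m, (intensity μ e / k) * deltaPP μ e i = 0) ∧
        (∑ e : Fin m, (intensity μ e / k) * |deltaPP μ e i|
            = (2 - 2 * (K i i).re) * (intensity μ i / k))) := by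
  constructor
  · intro i hi
    exact part1 μ hμ0 hμ1 k dinf hind i hi
  · intro K hH hP hK i hi
    constructor
    · rw [avg_lin μ (k : ℝ) hμ0 i, delta_sum_zero μ hμ0 hμ1 hhom hi, mul_zero]
    · rw [avg_abs μ (k : ℝ) (Nat.cast_nonneg k) hμ0 i,
        dpp_abs_sum μ hμ0 hμ1 hH hP hK hi]
      ring
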